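/- Let π: Γ̃ → Γ be a dilated harmonic double cover in which the dilated edge e ∈ E(Γ) is neither a bridge nor a loop of Γ. Then its preimage ẽ = π^{-1}(e) is neither a bridge nor a loop of Γ̃. -/

import Mathlib

open scoped Classical
noncomputable section

/-- A (model of a) metric graph: a finite (multi)graph with oriented edges
and positive edge lengths. -/
structure MGraph where
  V : Type
  E : Type
  [fintV : Fintype V]
  [fintE : Fintype E]
  s : E → V
  t : E → V
  len : E → ℝ
  len_pos : ∀ e, 0 < len e

attribute [instance] MGraph.fintV MGraph.fintE

namespace MGraph

/-- Two vertices are adjacent if some edge joins them. -/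
def Adj (G : MGraph) (u v : G.V) : Prop :=
  ∃ e : G.E, (G.s e = u ∧ G.t e = v) ∨ (G.s e = v ∧ G.t e = u)

/-- Reachability by walks. -/
def Reach (G : MGraph) : G.V → G.V → Prop :=
  Relation.ReflTransGen G.Adj

/-- A graph is connected if it is nonempty and any two vertices are joined by a walk. -/
def Connected (G : MGraph) : Prop :=
  Nonempty G.V ∧ ∀ u v : G.V, G.Reach u v

/-- The genus (first Betti number) of a connected graph: #E - #V + 1. -/
def genus (G : MGraph) : ℤ :=
  (Fintype.card G.E : ℤ) - (Fintype.card G.V : ℤ) + 1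

/-- The number of connected components. -/
def numComponents (G : MGraph) : ℕ :=
  Nat.card (Quot G.Reach)

/-- A tree is a connected graph with #V = #E + 1. -/
def IsTree (G : MGraph) : Prop :=
  G.Connected ∧ Fintype.card G.E + 1 = Fintype.card G.V

/-- A loop is an edge whose endpoints coincide. -/
def IsLoop (G : MGraph) (e : G.E) : Prop := G.s e = G.t e

/-- Delete a set of edges. -/
def deleteEdges (G : MGraph) (F : Set G.E) : MGraph where
  V := G.V
  E := {e : G.E // e ∉ F}
  fintV := G.fintV
  fintE := Fintype.ofFinite _
  s e := G.s e.1
  t e := G.t e.1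
  len e := G.len e.1
  len_pos e := G.len_pos e.1

/-- A bridge is an edge whose deletion disconnects the graph. -/
def IsBridge (G : MGraph) (e : G.E) : Prop :=
  ¬ (G.deleteEdges {e}).Connected

/-- Contract a set of edges: identify the endpoints of each edge of `F` and
remove the edges of `F`. -/
def contractEdges (G : MGraph) (F : Set G.E) : MGraph where
  V := Quot (fun u v : G.V => ∃ e ∈ F, G.s e = u ∧ G.t e = v)
  E := {e : G.E // e ∉ F}
  fintV := Fintype.ofFinite _
  fintE := Fintype.ofFinite _
  s e := Quot.mk _ (G.s e.1)
  t e := Quot.mk _ (G.t e.1)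
  len e := G.len e.1
  len_pos e := G.len_pos e.1

/-- The subgraph induced on a set of vertices (with all edges joining them). -/
def inducedOn (G : MGraph) (S : Set G.V) : MGraph where
  V := {v : G.V // v ∈ S}
  E := {e : G.E // G.s e ∈ S ∧ G.t e ∈ S}
  fintV := Fintype.ofFinite _
  fintE := Fintype.ofFinite _
  s e := ⟨G.s e.1, e.2.1⟩
  t e := ⟨G.t e.1, e.2.2⟩
  len e := G.len e.1
  len_pos e := G.len_pos e.1

/-- The connected component of a vertex, as a set of vertices. -/
def componentOf (G : MGraph) (v : G.V) : Set G.V := {u : G.V | G.Reach v u}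

/-- The Jacobian polynomial of a metric graph: the sum, over all `g`-element
sets `C` of edges whose complement is a spanning tree, of the product of the
lengths of the edges of `C`. -/
def jacPoly (G : MGraph) : ℝ :=
  ∑ C : Finset G.E,
    if (C.card : ℤ) = G.genus ∧ (G.deleteEdges (↑C)).IsTree then ∏ e ∈ C, G.len e else 0

end MGraph

/-- A harmonic double cover of metric graphs, encoded by the projection
together with its deck involution.  A vertex or edge downstairs is *dilated*
if its fiber is a single (involution-fixed) point; dilated edges have
half the length of their image. -/
structure DoubleCover (Gt G : MGraph) where
  πV : Gt.V → G.V
  πE : Gt.E → G.E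
  ιV : Gt.V → Gt.V
  ιE : Gt.E → Gt.E
  ιV_invol : ∀ w, ιV (ιV w) = w
  ιE_invol : ∀ f, ιE (ιE f) = f
  πV_ι : ∀ w, πV (ιV w) = πV w
  πE_ι : ∀ f, πE (ιE f) = πE f
  s_comm : ∀ f, G.s (πE f) = πV (Gt.s f)
  t_comm : ∀ f, G.t (πE f) = πV (Gt.t f)
  s_ι : ∀ f, Gt.s (ιE f) = ιV (Gt.s f)
  t_ι : ∀ f, Gt.t (ιE f) = ιV (Gt.t f)
  πV_surj : Function.Surjective πV
  πE_surj : Function.Surjective πE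
  fiberV : ∀ w w', πV w' = πV w → w' = w ∨ w' = ιV w
  fiberE : ∀ f f', πE f' = πE f → f' = f ∨ f' = ιE f
  len_eq : ∀ f, Gt.len f = if ιE f = f then G.len (πE f) / 2 else G.len (πE f)

namespace DoubleCover

variable {Gt G : MGraph} (dc : DoubleCover Gt G)

/-- A vertex of the base is dilated if it has a unique (involution-fixed) preimage. -/
def dilatedV (v : G.V) : Prop := ∃ w, dc.πV w = v ∧ dc.ιV w = w

/-- An edge of the base is dilated if it has a unique (involution-fixed) preimage. -/
def dilatedE (e : G.E) : Prop := ∃ f, dc.πE f = e ∧ dc.ιE f = f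

/-- A double cover is free if it has no dilated vertices (hence no dilated edges). -/
def IsFree : Prop := ∀ v : G.V, ¬ dc.dilatedV v

/-- A double cover is dilated if it has a dilated vertex. -/
def IsDilated : Prop := ∃ v : G.V, dc.dilatedV v

/-- A double cover is edge-free if its dilation subgraph consists of isolated
vertices only, i.e. there are no dilated edges. -/
def IsEdgeFree : Prop := ∀ e : G.E, ¬ dc.dilatedE e

/-- The dilation subgraph: the subgraph of the base consisting of all dilated
vertices and dilated edges. -/
def dilSubgraph : MGraph where
  V := {v : G.V // dc.dilatedV v}
  E := {e : G.E // dc.dilatedE e}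
  fintV := Fintype.ofFinite _
  fintE := Fintype.ofFinite _
  s e := ⟨G.s e.1, by
    obtain ⟨f, hf, hfix⟩ := e.2
    exact ⟨Gt.s f, by rw [← hf, dc.s_comm], by rw [← dc.s_ι, hfix]⟩⟩
  t e := ⟨G.t e.1, by
    obtain ⟨f, hf, hfix⟩ := e.2
    exact ⟨Gt.t f, by rw [← hf, dc.t_comm], by rw [← dc.t_ι, hfix]⟩⟩
  len e := G.len e.1
  len_pos e := G.len_pos e.1

/-- The number of dilated edges. -/
def md : ℕ := Nat.card {e : G.E // dc.dilatedE e}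

/-- The number of dilated vertices. -/
def nd : ℕ := Nat.card {v : G.V // dc.dilatedV v}

/-- The number of connected components of the dilation subgraph. -/
def numDilComponents : ℕ := dc.dilSubgraph.numComponents

/-- The connected component of `v` in `Γ ∖ F` has connected preimage in `Γ̃ ∖ π⁻¹(F)`. -/
def hasConnPreimage (F : Set G.E) (v : G.V) : Prop :=
  ((Gt.deleteEdges (dc.πE ⁻¹' F)).inducedOn
    {w : Gt.V | dc.πV w ∈ (G.deleteEdges F).componentOf v}).Connected

/-- An ogod (odd genus one decomposition): a set of `h = g(Γ̃) - g(Γ)` undilated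
edges of the base such that every connected component of the complement has
connected preimage. -/
def IsOgod (F : Finset G.E) : Prop :=
  (F.card : ℤ) = Gt.genus - G.genus ∧
  (∀ e ∈ F, ¬ dc.dilatedE e) ∧
  ∀ v : G.V, dc.hasConnPreimage (↑F) v

/-- The rank of an ogod: the number of connected components of `Γ ∖ F`. -/
def rank (_π : DoubleCover Gt G) (F : Finset G.E) : ℕ := (G.deleteEdges (↑F)).numComponents

/-- The Prym polynomial of a double cover. -/
def prymPoly : ℝ :=
  ∑ F : Finset G.E,
    if dc.IsOgod F then (4 : ℝ) ^ (dc.rank F - 1) * ∏ e ∈ F, G.len e else 0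

end DoubleCover

/-!
The image of a loop is a loop, so `ẽ` is not one. Because `e` is dilated, `ẽ` is fixed by the
deck involution, and so is its source `x`, whose fibre is therefore `{x}`. Walks in `Γ ∖ e` lift
to walks in `Γ̃ ∖ ẽ` from any starting point over their start; lifting a walk from `π w` to `π x`
joins `w` to `x` in `Γ̃ ∖ ẽ`.
-/

namespace MGraph

theorem Adj.symm {G : MGraph} {u v : G.V} (h : G.Adj u v) : G.Adj v u := by
  obtain ⟨e, h⟩ := h
  exact ⟨e, h.symm⟩

instance (G : MGraph) : Std.Symm G.Adj := ⟨fun _ _ => Adj.symm⟩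

theorem Reach.symm {G : MGraph} {u v : G.V} (h : G.Reach u v) : G.Reach v u :=
  show Relation.ReflTransGen G.Adj v u from Std.Symm.symm _ _ h

theorem connected_of_forall_reach {G : MGraph} {x : G.V} (h : ∀ w, G.Reach w x) :
    G.Connected :=
  ⟨⟨x⟩, fun u v => (h u).trans (h v).symm⟩

end MGraph

namespace DoubleCover

variable {Gt G : MGraph} (dc : DoubleCover Gt G)

theorem ιE_eq_self_of_dilatedE {f : Gt.E} (h : dc.dilatedE (dc.πE f)) : dc.ιE f = f := by
  obtain ⟨f₀, hf₀, hfix⟩ := h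
  rcases dc.fiberE f₀ f hf₀.symm with rfl | rfl
  · exact hfix
  · rw [dc.ιE_invol, hfix]

theorem isLoop_πE {f : Gt.E} (h : Gt.IsLoop f) : G.IsLoop (dc.πE f) := by
  unfold MGraph.IsLoop at h ⊢
  rw [dc.s_comm, dc.t_comm, h]

theorem exists_lift_of_source {e : G.E} {w : Gt.V} (hw : dc.πV w = G.s e) :
    ∃ f, dc.πE f = e ∧ Gt.s f = w := by
  obtain ⟨f, rfl⟩ := dc.πE_surj e
  rcases dc.fiberV w (Gt.s f) (by rw [hw, dc.s_comm]) with h | h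
  · exact ⟨f, rfl, h⟩
  · exact ⟨dc.ιE f, dc.πE_ι f, by rw [dc.s_ι, h, dc.ιV_invol]⟩

theorem exists_lift_of_target {e : G.E} {w : Gt.V} (hw : dc.πV w = G.t e) :
    ∃ f, dc.πE f = e ∧ Gt.t f = w := by
  obtain ⟨f, rfl⟩ := dc.πE_surj e
  rcases dc.fiberV w (Gt.t f) (by rw [hw, dc.t_comm]) with h | h
  · exact ⟨f, rfl, h⟩
  · exact ⟨dc.ιE f, dc.πE_ι f, by rw [dc.t_ι, h, dc.ιV_invol]⟩

section Lifting

variable {F : Set G.E} {F' : Set Gt.E} (hF : ∀ f ∈ F', dc.πE f ∈ F)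
include hF

theorem lift_adj {c d : G.V} (h : (G.deleteEdges F).Adj c d) {w : Gt.V} (hw : dc.πV w = c) :
    ∃ w', dc.πV w' = d ∧ (Gt.deleteEdges F').Adj w w' := by
  obtain ⟨⟨e, he⟩, ⟨hs, ht⟩ | ⟨hs, ht⟩⟩ := h
  · obtain ⟨f, rfl, hfw⟩ := dc.exists_lift_of_source (hw.trans hs.symm)
    exact ⟨Gt.t f, (dc.t_comm f).symm.trans ht, ⟨f, fun hf => he (hF f hf)⟩, .inl ⟨hfw, rfl⟩⟩
  · obtain ⟨f, rfl, hfw⟩ := dc.exists_lift_of_target (hw.trans ht.symm)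
    exact ⟨Gt.s f, (dc.s_comm f).symm.trans hs, ⟨f, fun hf => he (hF f hf)⟩, .inr ⟨rfl, hfw⟩⟩

theorem lift_reach {a b : G.V} (h : (G.deleteEdges F).Reach a b) {w : Gt.V}
    (hw : dc.πV w = a) : ∃ w', dc.πV w' = b ∧ (Gt.deleteEdges F').Reach w w' := by
  induction h with
  | refl => exact ⟨w, hw, .refl⟩
  | tail _ hadj ih =>
    obtain ⟨w', hw', hr⟩ := ih
    obtain ⟨w'', hw'', hadj'⟩ := dc.lift_adj hF hadj hw'
    exact ⟨w'', hw'', hr.tail hadj'⟩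

theorem connected_deleteEdges_of_ιV_eq_self (hconn : (G.deleteEdges F).Connected) {x : Gt.V}
    (hx : dc.ιV x = x) : (Gt.deleteEdges F').Connected := by
  refine MGraph.connected_of_forall_reach (x := x) fun w => ?_
  obtain ⟨w', hw', hr⟩ := dc.lift_reach hF (hconn.2 (dc.πV w) (dc.πV x)) rfl
  rcases dc.fiberV x w' hw' with rfl | rfl
  · exact hr
  · rwa [hx] at hr

end Lifting

end DoubleCover

theorem preimage_of_dilated_edge_not_bridge_not_loop_general
    (Gt G : MGraph) (dc : DoubleCover Gt G)
    (e : G.E) (he : dc.dilatedE e)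
    (hloop : ¬ G.IsLoop e) (hbridge : ¬ G.IsBridge e) :
    ∀ f : Gt.E, dc.πE f = e → ¬ Gt.IsLoop f ∧ ¬ Gt.IsBridge f := by
  rintro f rfl
  refine ⟨fun h => hloop (dc.isLoop_πE h), fun hbr => hbr ?_⟩
  have hsource : dc.ιV (Gt.s f) = Gt.s f := by rw [← dc.s_ι, dc.ιE_eq_self_of_dilatedE he]
  exact dc.connected_deleteEdges_of_ιV_eq_self (F := {dc.πE f})
    (fun _ hf' => congrArg dc.πE (Set.mem_singleton_iff.mp hf')) (not_not.mp hbridge) hsource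

/-- **Statement 13.**  If the dilated edge `e` of a dilated harmonic double cover
`π : Γ̃ → Γ` is neither a bridge nor a loop of `Γ`, then its (unique) preimage
`ẽ = π⁻¹(e)` is neither a bridge nor a loop of `Γ̃`. -/
theorem preimage_of_dilated_edge_not_bridge_not_loop
    (Gt G : MGraph) (dc : DoubleCover Gt G)
    (hGt : Gt.Connected) (hG : G.Connected) (hdil : dc.IsDilated)
    (e : G.E) (he : dc.dilatedE e)
    (hloop : ¬ G.IsLoop e) (hbridge : ¬ G.IsBridge e) :
    ∀ f : Gt.E, dc.πE f = e → ¬ Gt.IsLoop f ∧ ¬ Gt.IsBridge f :=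
  preimage_of_dilated_edge_not_bridge_not_loop_general Gt G dc e he hloop hbridge
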